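/- Let ρ be a congruence on M_n (n ≥ 1). If the element d is invertible in the quotient M_n/ρ (i.e., there is x with [d]x = x[d] = 1), then ρ = M_n × M_n. -/

import Mathlib

/-!
Once `d` is invertible, `db = 1` makes `b` its inverse, so `aⁿb = 0` gives `aⁿ = 0 · d = 0` and
then `1 = aⁿcⁿ = 0 · cⁿ = 0`. A congruence identifying the zero with `1` identifies everything.
-/

inductive Letter | a | b | c | d | z
deriving DecidableEq

abbrev W := FreeMonoid Letter
def A : W := FreeMonoid.of .a
def B : W := FreeMonoid.of .b
def C : W := FreeMonoid.of .c
def D : W := FreeMonoid.of .d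
def Z : W := FreeMonoid.of .z

/-- The defining relations of `M n`, with the zero realized by the letter `z`. -/
def relM (n : ℕ) : W → W → Prop := fun x y =>
  (x = A ^ n * B ∧ y = Z) ∨
  (x = A * C ∧ y = 1) ∨ (x = D * B ∧ y = 1) ∨ (x = D * C ∧ y = 1) ∨
  (∃ k, 1 ≤ k ∧ k ≤ n - 1 ∧ x = D * A ^ k * B ∧ y = 1) ∨
  (∃ l : Letter, x = FreeMonoid.of l * Z ∧ y = Z) ∨
  (∃ l : Letter, x = Z * FreeMonoid.of l ∧ y = Z)

def Mcon (n : ℕ) : Con W := conGen (relM n)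

/-- The monoid `M n = Mon⟨a,b,c,d : aⁿb=0, ac=1, db=1, dc=1, daᵏb=1 (1 ≤ k ≤ n-1)⟩`. -/
abbrev M (n : ℕ) := (Mcon n).Quotient

theorem eq_one_of_isUnit_of_pow_mul_eq {N : Type*} [Monoid N] {a b c d z : N} {n : ℕ}
    (hz : ∀ w, z * w = z) (hd : IsUnit d) (hdb : d * b = 1) (hac : a * c = 1)
    (hanb : a ^ n * b = z) : z = 1 := by
  obtain ⟨x, -, hxd⟩ := isUnit_iff_exists.mp hd
  have hbd : b * d = 1 := left_inv_eq_right_inv hxd hdb ▸ hxd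
  have han : a ^ n = z := by rw [← hz d, ← hanb, mul_assoc, hbd, mul_one]
  rw [← hz (c ^ n), ← han, pow_mul_pow_eq_one n hac]

theorem Con.eq_top_of_rel_one {N : Type*} [Monoid N] (ρ : Con N) {z : N}
    (hz : ∀ m, m * z = z) (h : ρ z 1) : ρ = ⊤ := by
  have hrel (m : N) : ρ m z := by simpa [hz] using ρ.mul (ρ.refl m) (ρ.symm h)
  exact eq_top_iff.mpr fun x y _ => ρ.trans (hrel x) (ρ.symm (hrel y))

namespace M

variable {n : ℕ}

theorem mk'_eq_of_relM {x y : W} (h : relM n x y) : (Mcon n).mk' x = (Mcon n).mk' y :=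
  (Con.eq _).mpr (ConGen.Rel.of _ _ h)

theorem D_mul_B : (D : M n) * B = 1 := by
  simpa using mk'_eq_of_relM (n := n) (Or.inr (Or.inr (Or.inl ⟨rfl, rfl⟩)))

theorem A_mul_C : (A : M n) * C = 1 := by
  simpa using mk'_eq_of_relM (n := n) (Or.inr (Or.inl ⟨rfl, rfl⟩))

theorem A_pow_mul_B : (A : M n) ^ n * B = Z := by
  have h := mk'_eq_of_relM (n := n) (Or.inl ⟨rfl, rfl⟩)
  rwa [map_mul, map_pow] at h

theorem of_mul_Z (l : Letter) : (FreeMonoid.of l : M n) * Z = Z := by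
  simpa using mk'_eq_of_relM (n := n) (Or.inr (Or.inr (Or.inr (Or.inr (Or.inr
    (Or.inl ⟨l, rfl, rfl⟩))))))

theorem Z_mul_of (l : Letter) : (Z : M n) * FreeMonoid.of l = Z := by
  simpa using mk'_eq_of_relM (n := n) (Or.inr (Or.inr (Or.inr (Or.inr (Or.inr
    (Or.inr ⟨l, rfl, rfl⟩))))))

theorem Z_mul (m : M n) : (Z : M n) * m = Z := by
  induction m using Con.induction_on with
  | H w =>
    induction w using FreeMonoid.inductionOn with
    | one => simp
    | of l => exact Z_mul_of l
    | mul x y hx hy => rw [Con.coe_mul, ← mul_assoc, hx, hy]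

theorem mul_Z (m : M n) : m * Z = (Z : M n) := by
  induction m using Con.induction_on with
  | H w =>
    induction w using FreeMonoid.inductionOn with
    | one => simp
    | of l => exact of_mul_Z l
    | mul x y hx hy => rw [Con.coe_mul, mul_assoc, hy, hx]

end M

theorem stmt9_general (n : ℕ) (ρ : Con (M n))
    (h : ∃ x : ρ.Quotient, ((D : M n) : ρ.Quotient) * x = 1 ∧ x * ((D : M n) : ρ.Quotient) = 1) :
    ρ = ⊤ := by
  have hZ : ∀ w, ρ.mk' Z * w = ρ.mk' Z :=
    ρ.mk'_surjective.forall.mpr fun m => by rw [← map_mul, M.Z_mul]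
  have hZ1 : ρ.mk' Z = 1 :=
    eq_one_of_isUnit_of_pow_mul_eq (a := ρ.mk' A) (b := ρ.mk' B) (c := ρ.mk' C) (d := ρ.mk' D)
      hZ (isUnit_iff_exists.mpr h) (by rw [← map_mul, M.D_mul_B, map_one])
      (by rw [← map_mul, M.A_mul_C, map_one]) (by rw [← map_pow, ← map_mul, M.A_pow_mul_B])
  exact ρ.eq_top_of_rel_one M.mul_Z ((Con.eq ρ).mp hZ1)

/-- If the image of `d` is invertible in `M n / ρ`, then `ρ` is the full congruence. -/
theorem stmt9 (n : ℕ) (hn : 1 ≤ n) (ρ : Con (M n))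
    (h : ∃ x : ρ.Quotient, ((D : M n) : ρ.Quotient) * x = 1 ∧ x * ((D : M n) : ρ.Quotient) = 1) :
    ρ = ⊤ :=
  stmt9_general n ρ h
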